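/- arXiv:1207.1775 — 5 statements merged into one kernel-verified Lean document; each statement's English description precedes it below -/
import Mathlib

section
/- Let 0 → L → M → N → 0 be a short exact sequence of graded modules over a positively graded, locally finite algebra A generated in degrees 0 and 1, where M is generated in degree s, and let J = ⊕_{i≥1} A_i. Then L is generated in degree s if and only if JM ∩ L = JL. -/
/-!
Write `J = 𝒜₊`. Since `A = A₀ + J` and `A₀` preserves `M_s`, every element of `A · N` with
`N ⊆ M_s` an `A₀`-stable subgroup is `y + z` with `y ∈ N` and `z ∈ J · (A · N)`. As `M = A · M_s`
lives in degrees `≥ s`, `JM` lives in degrees `> s`, so `y` is the degree-`s` component.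
If `L = A · L_s`, an element of `JM ∩ L` therefore has `y = 0` and lies in `JL`.
Conversely, a homogeneous element of `L` of degree `i ≠ s` lies in `JM ∩ L = JL`, and the
degree-`i` component of an element of `JL` is an `A`-combination of homogeneous elements of `L`
of degree `< i`; strong induction on `i` gives `L = A · L_s`.
-/

open DirectSum HomogeneousIdeal

theorem HomogeneousIdeal.toIdeal_irrelevant_eq_span_succ {σA A : Type*} [Semiring A]
    [SetLike σA A] [AddSubmonoidClass σA A] (𝒜 : ℕ → σA) [GradedRing 𝒜] :
    𝒜₊.toIdeal = Submodule.span A (⋃ i : ℕ, (𝒜 (i + 1) : Set A)) := by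
  rw [irrelevant_eq_span]
  congr 1
  ext a
  simp only [Set.mem_iUnion, SetLike.mem_coe, exists_prop]
  exact ⟨fun ⟨i, hi, ha⟩ => ⟨i - 1, by rwa [Nat.sub_add_cancel hi]⟩,
    fun ⟨i, ha⟩ => ⟨i + 1, i.succ_pos, ha⟩⟩

theorem HomogeneousIdeal.sub_coe_decompose_zero_mem_irrelevant {σA A : Type*} [Ring A]
    [SetLike σA A] [AddSubmonoidClass σA A] (𝒜 : ℕ → σA) [GradedRing 𝒜] (a : A) :
    a - (decompose 𝒜 a 0 : A) ∈ 𝒜₊ := by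
  change GradedRing.projZeroRingHom 𝒜 (a - _) = 0
  rw [map_sub, sub_eq_zero, GradedRing.projZeroRingHom_apply,
    GradedRing.projZeroRingHom_apply, decompose_of_mem_same 𝒜 (SetLike.coe_mem _)]

theorem exists_add_mem_irrelevant_smul_of_mem_span {σA A M : Type*} [Ring A] [SetLike σA A]
    [AddSubmonoidClass σA A] (𝒜 : ℕ → σA) [GradedRing 𝒜] [AddCommMonoid M] [Module A M]
    {N : AddSubmonoid M} (hN : ∀ a ∈ 𝒜 0, ∀ x ∈ N, a • x ∈ N) {x : M}
    (hx : x ∈ Submodule.span A (N : Set M)) :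
    ∃ y ∈ N, ∃ z ∈ 𝒜₊.toIdeal • Submodule.span A (N : Set M), y + z = x := by
  induction hx using Submodule.span_induction with
  | mem x hx => exact ⟨x, hx, 0, Submodule.zero_mem _, add_zero x⟩
  | zero => exact ⟨0, N.zero_mem, 0, Submodule.zero_mem _, add_zero 0⟩
  | add x x' _ _ hx hx' =>
    obtain ⟨y, hy, z, hz, rfl⟩ := hx
    obtain ⟨y', hy', z', hz', rfl⟩ := hx'
    exact ⟨y + y', N.add_mem hy hy', z + z', Submodule.add_mem _ hz hz',
      add_add_add_comm y y' z z'⟩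
  | smul a x hxspan hx =>
    obtain ⟨y, hy, z, hz, rfl⟩ := hx
    -- split `a = a₀ + (a - a₀)`: the part `a₀` keeps `N` stable, the part `a - a₀` lies in `𝒜₊`
    refine ⟨(decompose 𝒜 a 0 : A) • y, hN _ (SetLike.coe_mem _) y hy,
      (decompose 𝒜 a 0 : A) • z + (a - decompose 𝒜 a 0) • (y + z),
      Submodule.add_mem _ (Submodule.smul_mem _ _ hz)
        (Submodule.smul_mem_smul (sub_coe_decompose_zero_mem_irrelevant 𝒜 a) hxspan), ?_⟩
    rw [← add_assoc, ← smul_add, ← add_smul, add_sub_cancel]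

section GradedSMul

variable {σA σM A M : Type*} [Semiring A] [SetLike σA A] (𝒜 : ℕ → σA)
  [AddCommMonoid M] [Module A M] [SetLike σM M] [AddSubmonoidClass σM M]
  (ℳ : ℕ → σM) [Decomposition ℳ] [SetLike.GradedSMul 𝒜 ℳ]

theorem DirectSum.coe_decompose_smul_of_left_mem {a : A} {i : ℕ} (ha : a ∈ 𝒜 i) (x : M)
    (n : ℕ) :
    (decompose ℳ (a • x) n : M) = if i ≤ n then a • (decompose ℳ x (n - i) : M) else 0 := by
  induction x using Decomposition.inductionOn ℳ with
  | zero => simp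
  | add x y hx hy => split_ifs at hx hy ⊢ <;> simp [smul_add, hx, hy]
  | @homogeneous j x =>
    have hax : a • (x : M) ∈ ℳ (i + j) := SetLike.GradedSMul.smul_mem ha x.2
    by_cases hn : i + j = n
    · subst hn
      rw [decompose_of_mem_same ℳ hax, if_pos (Nat.le_add_right i j), Nat.add_sub_cancel_left,
        decompose_of_mem_same ℳ x.2]
    · rw [decompose_of_mem_ne ℳ hax hn]
      split_ifs with hin
      · rw [decompose_of_mem_ne ℳ x.2 (by omega), smul_zero]
      · rfl

variable [AddSubmonoidClass σA A] [GradedRing 𝒜]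

theorem DirectSum.coe_decompose_smul (a : A) (x : M) (n : ℕ) :
    (decompose ℳ (a • x) n : M) =
      ∑ c ∈ Finset.range (n + 1), (decompose 𝒜 a c : A) • (decompose ℳ x (n - c) : M) := by
  induction a using Decomposition.inductionOn 𝒜 with
  | zero => simp
  | add a b ha hb => simp [add_smul, Finset.sum_add_distrib, ha, hb]
  | @homogeneous i a =>
    rw [coe_decompose_smul_of_left_mem 𝒜 ℳ a.2]
    split_ifs with hin
    · rw [Finset.sum_eq_single_of_mem i (Finset.mem_range.2 (by omega)) fun c _ hc => by
        rw [decompose_of_mem_ne 𝒜 a.2 (Ne.symm hc), zero_smul]]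
      rw [decompose_of_mem_same 𝒜 a.2]
    · refine (Finset.sum_eq_zero fun c hc => ?_).symm
      rw [decompose_of_mem_ne 𝒜 a.2 (by simp at hc; omega), zero_smul]

theorem DirectSum.coe_decompose_smul_mem_of_mem_irrelevant (P : Submodule A M) {a : A}
    (ha : a ∈ 𝒜₊) {x : M} {n : ℕ} (hx : ∀ j < n, (decompose ℳ x j : M) ∈ P) :
    (decompose ℳ (a • x) n : M) ∈ P := by
  rw [coe_decompose_smul 𝒜 ℳ]
  refine Submodule.sum_mem _ fun c hc => ?_
  rcases Nat.eq_zero_or_pos c with rfl | hc0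
  · rw [show (decompose 𝒜 a 0 : A) = 0 from ha, zero_smul]
    exact P.zero_mem
  · exact P.smul_mem _ (hx _ (by simp at hc; omega))

theorem DirectSum.coe_decompose_mem_of_mem_irrelevant_smul {N P : Submodule A M} {n : ℕ}
    (hN : ∀ x ∈ N, ∀ j < n, (decompose ℳ x j : M) ∈ P) {x : M} (hx : x ∈ 𝒜₊.toIdeal • N) :
    (decompose ℳ x n : M) ∈ P :=
  Submodule.smul_induction_on hx
    (fun _ ha y hy => coe_decompose_smul_mem_of_mem_irrelevant 𝒜 ℳ P ha (hN y hy))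
    (fun x y hx hy => by simpa using P.add_mem hx hy)

theorem DirectSum.coe_decompose_eq_zero_of_mem_irrelevant_smul_top {s : ℕ}
    (hM : Submodule.span A (ℳ s : Set M) = ⊤) {x : M} (hx : x ∈ 𝒜₊.toIdeal • (⊤ : Submodule A M))
    {j : ℕ} (hj : j ≤ s) : (decompose ℳ x j : M) = 0 := by
  have hlow : ∀ y : M, ∀ i < s, (decompose ℳ y i : M) = 0 := fun y i hi => by
    have hy : y ∈ Submodule.span A (ℳ s : Set M) := hM ▸ Submodule.mem_top
    induction hy using Submodule.span_induction generalizing i with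
    | mem y hy => exact decompose_of_mem_ne ℳ hy hi.ne'
    | zero => simp
    | add y z _ _ hy hz => simp [hy i hi, hz i hi]
    | smul a y _ hy =>
      rw [coe_decompose_smul 𝒜 ℳ]
      exact Finset.sum_eq_zero fun c _ => by rw [hy _ (by omega), smul_zero]
  exact (Submodule.mem_bot A).1 <| coe_decompose_mem_of_mem_irrelevant_smul 𝒜 ℳ
    (fun y _ i hi => (Submodule.mem_bot A).2 (hlow y i (by omega))) hx

end GradedSMul

section Ring

variable {σA σM A M : Type*} [Ring A] [SetLike σA A] [AddSubmonoidClass σA A]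
  (𝒜 : ℕ → σA) [GradedRing 𝒜]
  [AddCommMonoid M] [Module A M] [SetLike σM M] [AddSubmonoidClass σM M]
  (ℳ : ℕ → σM) [Decomposition ℳ] [SetLike.GradedSMul 𝒜 ℳ]

theorem mem_irrelevant_smul_span_of_coe_decompose_eq_zero {s : ℕ}
    (hM : Submodule.span A (ℳ s : Set M) = ⊤) (p : Submodule A M) {x : M}
    (hx : x ∈ Submodule.span A ((p : Set M) ∩ ℳ s)) (hxs : (decompose ℳ x s : M) = 0) :
    x ∈ 𝒜₊.toIdeal • Submodule.span A ((p : Set M) ∩ ℳ s) := by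
  let N : AddSubmonoid M := p.toAddSubmonoid ⊓ .ofClass (ℳ s)
  have hN : ∀ a ∈ 𝒜 0, ∀ x ∈ N, a • x ∈ N := fun a ha x hx =>
    ⟨p.smul_mem a hx.1, by simpa using SetLike.GradedSMul.smul_mem (B := ℳ) ha hx.2⟩
  change x ∈ Submodule.span A (N : Set M) at hx
  change x ∈ 𝒜₊.toIdeal • Submodule.span A (N : Set M)
  obtain ⟨y, hy, z, hz, rfl⟩ := exists_add_mem_irrelevant_smul_of_mem_span 𝒜 hN hx
  have hzs : (decompose ℳ z s : M) = 0 :=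
    coe_decompose_eq_zero_of_mem_irrelevant_smul_top 𝒜 ℳ hM
      (Submodule.smul_mono le_rfl le_top hz) le_rfl
  rw [decompose_add, DirectSum.add_apply, AddMemClass.coe_add, hzs, add_zero,
    decompose_of_mem_same ℳ hy.2] at hxs
  rwa [hxs, zero_add]

theorem irrelevant_smul_top_inf_eq_of_span_inter_eq {s : ℕ}
    (hM : Submodule.span A (ℳ s : Set M) = ⊤) (L : Submodule A M)
    (hgen : Submodule.span A ((L : Set M) ∩ ℳ s) = L) :
    𝒜₊.toIdeal • (⊤ : Submodule A M) ⊓ L = 𝒜₊.toIdeal • L := by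
  refine le_antisymm (fun x ⟨hxJ, hxL⟩ => ?_)
    (le_inf (Submodule.smul_mono le_rfl le_top) Submodule.smul_le_right)
  rw [← hgen] at hxL ⊢
  exact mem_irrelevant_smul_span_of_coe_decompose_eq_zero 𝒜 ℳ hM L hxL
    (coe_decompose_eq_zero_of_mem_irrelevant_smul_top 𝒜 ℳ hM hxJ le_rfl)

theorem span_inter_eq_of_irrelevant_smul_top_inf_eq {s : ℕ}
    (hM : Submodule.span A (ℳ s : Set M) = ⊤) {L : Submodule A M}
    (hL : SetLike.IsHomogeneous ℳ L) (hJ : 𝒜₊.toIdeal • (⊤ : Submodule A M) ⊓ L = 𝒜₊.toIdeal • L) :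
    Submodule.span A ((L : Set M) ∩ ℳ s) = L := by
  set L' := Submodule.span A ((L : Set M) ∩ ℳ s)
  have hhom : ∀ i, ∀ x ∈ L, x ∈ ℳ i → x ∈ L' := by
    intro i
    induction i using Nat.strong_induction_on with | _ i IH => ?_
    intro x hxL hxi
    by_cases his : i = s
    · exact Submodule.subset_span ⟨hxL, his ▸ hxi⟩
    have hxJ : x ∈ 𝒜₊.toIdeal • (⊤ : Submodule A M) := by
      simpa [hM] using mem_irrelevant_smul_span_of_coe_decompose_eq_zero 𝒜 ℳ hM ⊤ (x := x)
        (by simp [hM]) (decompose_of_mem_ne ℳ hxi his)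
    have hxJL : x ∈ 𝒜₊.toIdeal • L := hJ ▸ ⟨hxJ, hxL⟩
    rw [← decompose_of_mem_same ℳ hxi]
    exact coe_decompose_mem_of_mem_irrelevant_smul 𝒜 ℳ
      (fun y hy j hj => IH j hj _ (hL j hy) (SetLike.coe_mem _)) hxJL
  refine le_antisymm (Submodule.span_le.2 Set.inter_subset_left) fun x hx => ?_
  classical
  rw [← sum_support_decompose ℳ x]
  exact sum_mem fun i _ => hhom i _ (hL i hx) (SetLike.coe_mem _)

end Ring

theorem isHomogeneous_of_eq_iSup_inf {ι R M : Type*} [DecidableEq ι] [Semiring R]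
    [AddCommMonoid M] [Module R M] (ℳ : ι → Submodule R M) [Decomposition ℳ]
    {p : Submodule R M} (hp : p = ⨆ i, p ⊓ ℳ i) : SetLike.IsHomogeneous ℳ p := by
  intro i x hx
  rw [hp] at hx
  refine Submodule.iSup_induction _ (motive := fun x => (decompose ℳ x i : M) ∈ p) hx
    (fun j y hy => ?_) (by simp) (fun y z hy hz => by simpa using p.add_mem hy hz)
  by_cases hij : j = i
  · rw [decompose_of_mem_same ℳ (hij ▸ hy.2)]; exact hy.1
  · rw [decompose_of_mem_ne ℳ hy.2 hij]; exact p.zero_mem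

theorem stmt3_general
    {k A : Type*} [Field k] [Ring A] [Algebra k A]
    (𝒜 : ℕ → Submodule k A) [GradedAlgebra 𝒜]
    {M : Type*} [AddCommGroup M] [Module k M] [Module A M] [IsScalarTower k A M]
    (ℳ : ℕ → Submodule k M)
    (hMgr : iSup ℳ = ⊤ ∧ iSupIndep ℳ)
    (hMsmul : ∀ (i j : ℕ) (a : A) (x : M), a ∈ 𝒜 i → x ∈ ℳ j → a • x ∈ ℳ (i + j))
    -- `L` is a graded (homogeneous) submodule of `M`
    (L : Submodule A M)
    (hLhom : L.restrictScalars k = ⨆ i, (L.restrictScalars k ⊓ ℳ i))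
    -- `M` is generated in degree `s`
    (s : ℕ) (hM : Submodule.span A (ℳ s : Set M) = ⊤) :
    -- `L` is generated in degree `s`  ↔  `JM ∩ L = JL`
    Submodule.span A ((L : Set M) ∩ (ℳ s : Set M)) = L ↔
      (Submodule.span A (⋃ i : ℕ, (𝒜 (i + 1) : Set A)) : Ideal A) • (⊤ : Submodule A M) ⊓ L =
        (Submodule.span A (⋃ i : ℕ, (𝒜 (i + 1) : Set A)) : Ideal A) • L := by
  classical
  let : Decomposition ℳ :=
    (isInternal_submodule_of_iSupIndep_of_iSup_eq_top hMgr.2 hMgr.1).chooseDecomposition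
  have : SetLike.GradedSMul 𝒜 ℳ := ⟨fun i j _ _ ha hx => hMsmul i j _ _ ha hx⟩
  have hL : SetLike.IsHomogeneous ℳ L := isHomogeneous_of_eq_iSup_inf ℳ hLhom
  rw [← toIdeal_irrelevant_eq_span_succ]
  exact ⟨irrelevant_smul_top_inf_eq_of_span_inter_eq 𝒜 ℳ hM L,
    span_inter_eq_of_irrelevant_smul_top_inf_eq 𝒜 ℳ hM hL⟩

/-- Let `0 → L → M → N → 0` be a short exact sequence of graded modules
over a positively graded, locally finite algebra `A` generated in degrees 0 and 1
(here `L` is identified with a graded submodule of `M` and `N` with the quotient `M/L`),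
with `M` generated in degree `s`, and let `J = ⊕_{i ≥ 1} A_i`.
Then `L` is generated in degree `s` if and only if `JM ∩ L = JL`. -/
theorem stmt3
    {k A : Type*} [Field k] [Ring A] [Algebra k A]
    (𝒜 : ℕ → Submodule k A) [GradedAlgebra 𝒜]
    (hlf : ∀ i, FiniteDimensional k (𝒜 i))
    (hgen : ∀ i, 𝒜 1 * 𝒜 i = 𝒜 (i + 1))
    {M : Type*} [AddCommGroup M] [Module k M] [Module A M] [IsScalarTower k A M]
    (ℳ : ℕ → Submodule k M)
    (hMgr : iSup ℳ = ⊤ ∧ iSupIndep ℳ)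
    (hMsmul : ∀ (i j : ℕ) (a : A) (x : M), a ∈ 𝒜 i → x ∈ ℳ j → a • x ∈ ℳ (i + j))
    -- `L` is a graded (homogeneous) submodule of `M`
    (L : Submodule A M)
    (hLhom : L.restrictScalars k = ⨆ i, (L.restrictScalars k ⊓ ℳ i))
    -- `M` is generated in degree `s`
    (s : ℕ) (hM : Submodule.span A (ℳ s : Set M) = ⊤) :
    -- `L` is generated in degree `s`  ↔  `JM ∩ L = JL`
    Submodule.span A ((L : Set M) ∩ (ℳ s : Set M)) = L ↔
      (Submodule.span A (⋃ i : ℕ, (𝒜 (i + 1) : Set A)) : Ideal A) • (⊤ : Submodule A M) ⊓ L =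
        (Submodule.span A (⋃ i : ℕ, (𝒜 (i + 1) : Set A)) : Ideal A) • L :=
  stmt3_general 𝒜 ℳ hMgr hMsmul L hLhom s hM
end

section
/- Let A be a positively graded, locally finite algebra generated in degrees 0 and 1, and let M be a graded A-module generated in degree 0. Then M is Koszul (i.e., every i-th graded syzygy Ω^i(M) is generated in degree i) if and only if for all i > 0, Ω^i(M) ⊆ J P^{i-1} and Ω^i(M) ∩ J² P^{i-1} = J Ω^i(M), where P^{i-1} is a graded projective cover of Ω^{i-1}(M) and J = ⊕_{i≥1} A_i. -/
/-!
Write `J` for the ideal of positive-degree elements and `X_{≥ m}` for the submodule generated by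
the homogeneous elements of degree at least `m`. If a graded module `P` is generated in degree `i`,
then `J • P = P_{≥ i+1}`, and, since `A` is generated in degree one, `J • J • P = P_{≥ i+2}`.
So when `Ω ⊆ P` is generated in degree `i + 1` both conditions follow by comparing degrees.
Conversely, the two conditions put every homogeneous element of `Ω` of degree `> i + 1` into
`J • Ω`, and graded Nakayama (an induction on the degree, since `J` raises it) shows that `Ω` is
generated in degree `i + 1`. Minimality of the resolution turns "`Ω^i` is generated in degree `i`"
into "`P^i` is generated in degree `i`", which drives the induction on `i`.
-/

open DirectSum Submodule Pointwise

section GradedRing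

variable {k A : Type*} [CommSemiring k] [Semiring A] [Algebra k A]
variable (𝒜 : ℕ → Submodule k A)

-- An `abbrev`, so that instances stated for `Ideal.span` (as in `span_smul_span`) apply to it.
abbrev irrelevantIdeal : Ideal A := Ideal.span (⋃ n, (𝒜 (n + 1) : Set A))

variable {𝒜}

theorem mem_irrelevantIdeal {n : ℕ} (hn : n ≠ 0) {a : A} (ha : a ∈ 𝒜 n) :
    a ∈ irrelevantIdeal 𝒜 := by
  obtain ⟨m, rfl⟩ := Nat.exists_eq_succ_of_ne_zero hn
  exact Ideal.subset_span (Set.mem_iUnion.2 ⟨m, ha⟩)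

variable [GradedAlgebra 𝒜]

instance irrelevantIdeal.isTwoSided : (irrelevantIdeal 𝒜).IsTwoSided where
  mul_mem_of_left b ha := by
    classical
    induction ha using span_induction with
    | mem c hc =>
      obtain ⟨n, hc⟩ := Set.mem_iUnion.1 hc
      rw [← sum_support_decompose 𝒜 b, Finset.mul_sum]
      exact sum_mem fun m _ ↦
        mem_irrelevantIdeal (by omega) (SetLike.mul_mem_graded hc (decompose 𝒜 b m).2)
    | zero => simp
    | add x y _ _ hx hy => rw [add_mul]; exact add_mem hx hy
    | smul r x _ hx => rw [smul_eq_mul, mul_assoc]; exact Ideal.mul_mem_left _ r hx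

variable (𝒜) in
theorem span_iUnion_grade_eq_top : span k (⋃ n, (𝒜 n : Set A)) = ⊤ := by
  rw [← iSup_eq_span]
  exact (Decomposition.isInternal 𝒜).submodule_iSup_eq_top

end GradedRing

section GradedModule

variable {k A X : Type*} [CommSemiring k] [Semiring A] [AddCommGroup X] [Module k X] [Module A X]
variable (G : ℕ → Submodule k X)

variable (A) in
def degreeGE (m : ℕ) : Submodule A X := span A (⋃ j, ⋃ (_ : m ≤ j), (G j : Set X))

theorem mem_degreeGE {m j : ℕ} (h : m ≤ j) {x : X} (hx : x ∈ G j) : x ∈ degreeGE A G m :=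
  subset_span (Set.mem_biUnion h hx)

theorem irrelevantIdeal_smul_degreeGE_le [Algebra k A] {𝒜 : ℕ → Submodule k A}
    [GradedAlgebra 𝒜] [SetLike.GradedSMul 𝒜 G] (m : ℕ) :
    irrelevantIdeal 𝒜 • degreeGE A G m ≤ degreeGE A G (m + 1) := by
  rw [degreeGE, span_smul_span, span_le]
  rintro _ ⟨a, ha, x, hx, rfl⟩
  obtain ⟨n, ha⟩ := Set.mem_iUnion.1 ha
  obtain ⟨j, hj, hx⟩ := Set.mem_iUnion₂.1 hx
  exact mem_degreeGE G (by omega)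
    (show a • x ∈ G (n + 1 + j) from SetLike.GradedSMul.smul_mem ha hx)

variable [Decomposition G]

theorem mem_of_forall_decompose_mem {P : Type*} [SetLike P X] [AddSubmonoidClass P X] {Q : P}
    {x : X} (h : ∀ t, (decompose G x t : X) ∈ Q) : x ∈ Q := by
  classical
  rw [← sum_support_decompose G x]
  exact sum_mem fun t _ ↦ h t

theorem Submodule.IsHomogeneous.le_span_inter_grade {W : Submodule A X} (hW : W.IsHomogeneous G) :
    W ≤ span A (⋃ j, (W : Set X) ∩ G j) := by
  classical
  intro x hx
  rw [← sum_support_decompose G x]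
  exact sum_mem fun j _ ↦ subset_span (Set.mem_iUnion.2 ⟨j, hW j hx, (decompose G x j).2⟩)

variable {Y : Type*} [AddCommGroup Y] [Module k Y] [Module A Y]
variable (GY : ℕ → Submodule k Y) [Decomposition GY]

theorem coe_decompose_map {F : Type*} [FunLike F Y X] [AddMonoidHomClass F Y X] (f : F)
    (hf : ∀ t, ∀ y ∈ GY t, f y ∈ G t) (y : Y) (t : ℕ) :
    (decompose G (f y) t : X) = f (decompose GY y t) := by
  induction y using Decomposition.inductionOn GY with
  | zero => simp
  | @homogeneous j y =>
    rcases eq_or_ne j t with rfl | hjt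
    · rw [decompose_of_mem_same G (hf j y y.2), decompose_of_mem_same GY y.2]
    · rw [decompose_of_mem_ne G (hf j y y.2) hjt, decompose_of_mem_ne GY y.2 hjt, map_zero]
  | add y y' hy hy' =>
    simp only [map_add, decompose_add, DirectSum.add_apply, coe_add, hy, hy']

theorem isHomogeneous_range (f : Y →ₗ[A] X) (hf : ∀ t, ∀ y ∈ GY t, f y ∈ G t) :
    (LinearMap.range f).IsHomogeneous G := by
  rintro t _ ⟨y, rfl⟩
  rw [coe_decompose_map G GY f hf]
  exact LinearMap.mem_range_self f _

theorem exists_mem_grade_of_mem_range (f : Y →ₗ[A] X) (hf : ∀ t, ∀ y ∈ GY t, f y ∈ G t)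
    {x : X} {s : ℕ} (hx : x ∈ LinearMap.range f) (hxs : x ∈ G s) : ∃ y ∈ GY s, f y = x := by
  obtain ⟨y, rfl⟩ := hx
  refine ⟨_, (decompose GY y s).2, ?_⟩
  rw [← coe_decompose_map G GY f hf, decompose_of_mem_same G hxs]

variable [Algebra k A] [IsScalarTower k A X]

-- `A` is `k`-spanned by homogeneous elements, so `span A (⋃ j, S j)` is `k`-spanned by the
-- homogeneous elements `a • s`.
theorem decompose_mem_of_mem_span (𝒜 : ℕ → Submodule k A) [GradedAlgebra 𝒜]
    [SetLike.GradedSMul 𝒜 G] {S : ℕ → Set X} (hS : ∀ j, S j ⊆ G j) {x : X}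
    (hx : x ∈ span A (⋃ j, S j)) {t : ℕ} {Q : Submodule A X}
    (hQ : ∀ n j, n + j = t → ∀ a ∈ 𝒜 n, ∀ s ∈ S j, a • s ∈ Q) :
    (decompose G x t : X) ∈ Q := by
  rw [← restrictScalars_mem k, ← span_smul_of_span_eq_top (span_iUnion_grade_eq_top 𝒜)] at hx
  induction hx using span_induction with
  | mem y hy =>
    obtain ⟨a, ha, s, hs, rfl⟩ := hy
    obtain ⟨n, ha⟩ := Set.mem_iUnion.1 ha
    obtain ⟨j, hs⟩ := Set.mem_iUnion.1 hs
    have hy : a • s ∈ G (n + j) := SetLike.GradedSMul.smul_mem ha (hS j hs)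
    by_cases hnj : n + j = t
    · rw [decompose_of_mem_same G (hnj ▸ hy)]
      exact hQ n j hnj a ha s hs
    · rw [decompose_of_mem_ne G hy hnj]
      exact zero_mem Q
  | zero => simp
  | add x y _ _ hx hy => simpa using add_mem hx hy
  | smul c y _ hy =>
    rw [decompose_smul, DirectSum.smul_apply, SetLike.val_smul]
    exact Q.smul_of_tower_mem c hy

theorem decompose_mem_of_mem_span_of_subset (𝒜 : ℕ → Submodule k A) [GradedAlgebra 𝒜]
    [SetLike.GradedSMul 𝒜 G] {S : Set X} {d : ℕ} (hS : S ⊆ G d) {x : X}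
    (hx : x ∈ span A S) {t : ℕ} {Q : Submodule A X}
    (hQ : ∀ n, n + d = t → ∀ a ∈ 𝒜 n, ∀ s ∈ S, a • s ∈ Q) :
    (decompose G x t : X) ∈ Q := by
  have hS' : (⋃ j, {s ∈ S | j = d}) = S := by ext; simp
  refine decompose_mem_of_mem_span G 𝒜 (S := fun j ↦ {s ∈ S | j = d}) ?_ (by rwa [hS']) ?_
  · rintro j s ⟨hs, rfl⟩
    exact hS hs
  · rintro n j hnj a ha s ⟨hs, rfl⟩
    exact hQ n hnj a ha s hs

theorem decompose_eq_zero_of_mem_degreeGE (𝒜 : ℕ → Submodule k A) [GradedAlgebra 𝒜]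
    [SetLike.GradedSMul 𝒜 G] {m t : ℕ} (ht : t < m) {x : X} (hx : x ∈ degreeGE A G m) :
    (decompose G x t : X) = 0 := by
  refine (mem_bot A).1 (decompose_mem_of_mem_span G 𝒜
    (fun j ↦ Set.iUnion_subset fun _ ↦ subset_rfl) hx fun n j hnj a _ s hs ↦ ?_)
  obtain ⟨hmj, -⟩ := Set.mem_iUnion.1 hs
  omega

theorem span_grade_eq_top_of_ker_superfluous (𝒜 : ℕ → Submodule k A) [GradedAlgebra 𝒜]
    [SetLike.GradedSMul 𝒜 G] (f : Y →ₗ[A] X)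
    (hf : ∀ t, ∀ y ∈ GY t, f y ∈ G t) {s : ℕ}
    (hgen : span A ((LinearMap.range f : Set X) ∩ G s) = LinearMap.range f)
    (hsup : ∀ N : Submodule A Y, N ⊔ LinearMap.ker f = ⊤ → N = ⊤) :
    span A (GY s : Set Y) = ⊤ := by
  refine hsup _ (eq_top_iff.2 fun y _ ↦ ?_)
  refine mem_of_forall_decompose_mem GY fun t ↦ ?_
  set yt : Y := (decompose GY y t : Y)
  have hfyt : f yt ∈ span A ((LinearMap.range f : Set X) ∩ G s) := by
    rw [hgen]; exact LinearMap.mem_range_self f yt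
  obtain ⟨z, hz, hfz⟩ : f yt ∈ (span A (GY s : Set Y)).map f := by
    rw [← decompose_of_mem_same G (hf t yt (decompose GY y t).2)]
    refine decompose_mem_of_mem_span_of_subset G 𝒜 Set.inter_subset_right hfyt
      fun n _ a _ x ⟨hxf, hxs⟩ ↦ ?_
    obtain ⟨u, hu, rfl⟩ := exists_mem_grade_of_mem_range G GY f hf hxf hxs
    exact ⟨a • u, smul_mem _ a (subset_span hu), map_smul f a u⟩
  refine mem_sup.2 ⟨z, hz, yt - z, ?_, add_sub_cancel z yt⟩
  rw [LinearMap.mem_ker, map_sub, hfz, sub_self]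

variable {𝒜 : ℕ → Submodule k A} [GradedAlgebra 𝒜] [SetLike.GradedSMul 𝒜 G]

theorem mem_irrelevantIdeal_smul_top {i j : ℕ} (hX : span A (G i : Set X) = ⊤) (hij : i < j)
    {x : X} (hx : x ∈ G j) : x ∈ irrelevantIdeal 𝒜 • (⊤ : Submodule A X) := by
  have hxi : x ∈ span A (G i : Set X) := by rw [hX]; exact mem_top
  rw [← decompose_of_mem_same G hx]
  refine decompose_mem_of_mem_span_of_subset G 𝒜 subset_rfl hxi fun n hn a ha _ _ ↦ ?_
  exact smul_mem_smul (mem_irrelevantIdeal (by omega) ha) mem_top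

theorem irrelevantIdeal_smul_top_eq {i : ℕ} (hX : span A (G i : Set X) = ⊤) :
    irrelevantIdeal 𝒜 • (⊤ : Submodule A X) = degreeGE A G (i + 1) := by
  refine le_antisymm ?_ (span_le.2 fun x hx ↦ ?_)
  · calc irrelevantIdeal 𝒜 • ⊤ ≤ irrelevantIdeal 𝒜 • degreeGE A G i :=
          smul_mono_right _ (hX ▸ span_le.2 fun x hx ↦ mem_degreeGE G le_rfl hx)
      _ ≤ degreeGE A G (i + 1) := irrelevantIdeal_smul_degreeGE_le (𝒜 := 𝒜) G i
  · obtain ⟨j, hij, hx⟩ := Set.mem_iUnion₂.1 hx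
    exact mem_irrelevantIdeal_smul_top G hX hij hx

theorem irrelevantIdeal_smul_irrelevantIdeal_smul_top_le {i : ℕ}
    (hX : span A (G i : Set X) = ⊤) :
    irrelevantIdeal 𝒜 • irrelevantIdeal 𝒜 • (⊤ : Submodule A X) ≤ degreeGE A G (i + 2) := by
  rw [irrelevantIdeal_smul_top_eq G hX]
  exact irrelevantIdeal_smul_degreeGE_le G (i + 1)

theorem irrelevantIdeal_smul_irrelevantIdeal_smul_top_eq
    (hA : ∀ n, 𝒜 1 * 𝒜 n = 𝒜 (n + 1)) {i : ℕ} (hX : span A (G i : Set X) = ⊤) :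
    irrelevantIdeal 𝒜 • irrelevantIdeal 𝒜 • (⊤ : Submodule A X) = degreeGE A G (i + 2) := by
  refine le_antisymm (irrelevantIdeal_smul_irrelevantIdeal_smul_top_le G hX)
    (span_le.2 fun x hx ↦ ?_)
  obtain ⟨j, hij, hx⟩ := Set.mem_iUnion₂.1 hx
  rw [SetLike.mem_coe, ← decompose_of_mem_same G hx]
  refine decompose_mem_of_mem_span_of_subset G 𝒜 subset_rfl (by rw [hX]; exact mem_top)
    fun n hn a ha s hs ↦ ?_
  obtain ⟨p, rfl⟩ : ∃ p, n = p + 2 := ⟨n - 2, by omega⟩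
  have ha : a ∈ 𝒜 1 * 𝒜 (p + 1) := by rw [hA]; exact ha
  refine Submodule.mul_induction_on ha (fun b hb c hc ↦ ?_) fun _ _ h h' ↦ by
    rw [add_smul]; exact add_mem h h'
  rw [mul_smul]
  exact smul_mem_smul (mem_irrelevantIdeal one_ne_zero hb) (mem_irrelevantIdeal_smul_top G hX
    (by omega) (show c • s ∈ G (p + 1 + i) from SetLike.GradedSMul.smul_mem hc hs))

theorem le_of_le_sup_irrelevantIdeal_smul {W N : Submodule A X} (hW : W.IsHomogeneous G)
    (hN : N.IsHomogeneous G) (h : W ≤ N ⊔ irrelevantIdeal 𝒜 • W) : W ≤ N := by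
  suffices hom : ∀ t, ∀ w ∈ W, w ∈ G t → w ∈ N from
    fun x hx ↦ mem_of_forall_decompose_mem G fun t ↦ hom t _ (hW t hx) (decompose G x t).2
  intro t
  induction t using Nat.strong_induction_on with
  | _ t ih =>
  intro w hw hwt
  obtain ⟨y, hy, z, hz, rfl⟩ := mem_sup.1 (h hw)
  rw [← decompose_of_mem_same G hwt, decompose_add, DirectSum.add_apply, coe_add]
  refine add_mem (hN t hy) ?_
  let S (j : ℕ) : Set X :=
    ⋃ (p) (l) (_ : p + 1 + l = j), (𝒜 (p + 1) : Set A) • ((W : Set X) ∩ G l)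
  have hSG (j : ℕ) : S j ⊆ G j := by
    simp only [S, Set.iUnion_subset_iff]
    rintro p l rfl _ ⟨c, hc, v, ⟨-, hv⟩, rfl⟩
    exact SetLike.GradedSMul.smul_mem hc hv
  have hzS : z ∈ span A (⋃ j, S j) := by
    have hz' := smul_mono_right _ hW.le_span_inter_grade hz
    rw [span_smul_span] at hz'
    refine span_mono ?_ hz'
    rintro _ ⟨c, hc, v, hv, rfl⟩
    obtain ⟨p, hc⟩ := Set.mem_iUnion.1 hc
    obtain ⟨l, hv⟩ := Set.mem_iUnion.1 hv
    simp only [S, Set.mem_iUnion]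
    exact ⟨_, p, l, rfl, Set.smul_mem_smul hc hv⟩
  refine decompose_mem_of_mem_span G 𝒜 hSG hzS fun n j hnj a ha y hy ↦ ?_
  simp only [S, Set.mem_iUnion] at hy
  obtain ⟨p, l, rfl, c, hc, v, ⟨hvW, hvl⟩, rfl⟩ := hy
  rw [← mul_smul]
  exact N.smul_mem _ (ih l (by omega) v hvW hvl)

theorem le_irrelevantIdeal_smul_top {i : ℕ} (hX : span A (G i : Set X) = ⊤) {W : Submodule A X}
    (hW : span A ((W : Set X) ∩ G (i + 1)) = W) : W ≤ irrelevantIdeal 𝒜 • ⊤ := by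
  rw [← hW, irrelevantIdeal_smul_top_eq G hX]
  exact span_le.2 fun w hw ↦ mem_degreeGE G le_rfl hw.2

theorem irrelevantIdeal_smul_irrelevantIdeal_smul_top_inf_eq {i : ℕ}
    (hX : span A (G i : Set X) = ⊤) {W : Submodule A X}
    (hW : span A ((W : Set X) ∩ G (i + 1)) = W) :
    irrelevantIdeal 𝒜 • irrelevantIdeal 𝒜 • ⊤ ⊓ W = irrelevantIdeal 𝒜 • W := by
  refine le_antisymm (fun x hx ↦ mem_of_forall_decompose_mem G fun t ↦ ?_)
    (le_inf (smul_mono_right _ (le_irrelevantIdeal_smul_top G hX hW)) smul_le_right)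
  obtain ⟨hxJ, hxW⟩ := mem_inf.1 hx
  by_cases ht : t < i + 2
  · rw [decompose_eq_zero_of_mem_degreeGE G 𝒜 ht
      (irrelevantIdeal_smul_irrelevantIdeal_smul_top_le G hX hxJ)]
    exact zero_mem _
  · rw [← hW] at hxW
    refine decompose_mem_of_mem_span_of_subset G 𝒜 Set.inter_subset_right hxW
      fun n hn a ha w hw ↦ ?_
    exact smul_mem_smul (mem_irrelevantIdeal (by omega) ha) hw.1

theorem span_inter_grade_eq_of_irrelevantIdeal (hA : ∀ n, 𝒜 1 * 𝒜 n = 𝒜 (n + 1)) {i : ℕ}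
    (hX : span A (G i : Set X) = ⊤) {W : Submodule A X} (hW : W.IsHomogeneous G)
    (hWJ : W ≤ irrelevantIdeal 𝒜 • ⊤)
    (hWJ2 : irrelevantIdeal 𝒜 • irrelevantIdeal 𝒜 • ⊤ ⊓ W = irrelevantIdeal 𝒜 • W) :
    span A ((W : Set X) ∩ G (i + 1)) = W := by
  set N := span A ((W : Set X) ∩ G (i + 1))
  have hN : N.IsHomogeneous G := fun t x hx ↦
    decompose_mem_of_mem_span_of_subset G 𝒜 Set.inter_subset_right hx
      fun _ _ a _ s hs ↦ N.smul_mem a (subset_span hs)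
  refine le_antisymm (span_le.2 fun w hw ↦ hw.1) (le_of_le_sup_irrelevantIdeal_smul (𝒜 := 𝒜) G
    hW hN fun x hx ↦ mem_of_forall_decompose_mem G fun t ↦ ?_)
  have hw : (decompose G x t : X) ∈ W := hW t hx
  have hwt : (decompose G x t : X) ∈ G t := (decompose G x t).2
  rcases lt_trichotomy t (i + 1) with ht | rfl | ht
  · have hw0 := decompose_eq_zero_of_mem_degreeGE G 𝒜 ht
      (irrelevantIdeal_smul_top_eq (𝒜 := 𝒜) G hX ▸ hWJ hw)
    rw [decompose_of_mem_same G hwt] at hw0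
    rw [hw0]
    exact zero_mem _
  · exact mem_sup_left (subset_span ⟨hw, hwt⟩)
  · refine mem_sup_right (hWJ2 ▸ mem_inf.2 ⟨?_, hw⟩)
    rw [irrelevantIdeal_smul_irrelevantIdeal_smul_top_eq G hA hX]
    exact mem_degreeGE G ht hwt

end GradedModule

theorem stmt5_general
    {k A : Type*} [Field k] [Ring A] [Algebra k A]
    (𝒜 : ℕ → Submodule k A) [GradedAlgebra 𝒜]
    (hgen : ∀ i, 𝒜 1 * 𝒜 i = 𝒜 (i + 1))
    -- the graded module `M`, generated in degree 0
    {M : Type*} [AddCommGroup M] [Module k M] [Module A M] [IsScalarTower k A M]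
    (ℳ : ℕ → Submodule k M)
    (hMgr : iSup ℳ = ⊤ ∧ iSupIndep ℳ)
    (hMsmul : ∀ (i j : ℕ) (a : A) (x : M), a ∈ 𝒜 i → x ∈ ℳ j → a • x ∈ ℳ (i + j))
    (hMgen : Submodule.span A (ℳ 0 : Set M) = ⊤)
    -- a minimal graded projective resolution `⋯ → P 1 → P 0 → M → 0`
    (P : ℕ → Type*) [∀ i, AddCommGroup (P i)] [∀ i, Module k (P i)]
    [∀ i, Module A (P i)] [∀ i, IsScalarTower k A (P i)]
    (Pgr : ∀ i, ℕ → Submodule k (P i))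
    (hPgr : ∀ i, iSup (Pgr i) = ⊤ ∧ iSupIndep (Pgr i))
    (hPsmul : ∀ (i : ℕ) (n j : ℕ) (a : A) (x : P i), a ∈ 𝒜 n → x ∈ Pgr i j →
      a • x ∈ Pgr i (n + j))
    (ε : P 0 →ₗ[A] M) (d : ∀ i, P (i + 1) →ₗ[A] P i)
    (hεgr : ∀ (j : ℕ) (x : P 0), x ∈ Pgr 0 j → ε x ∈ ℳ j)
    (hdgr : ∀ (i j : ℕ) (x : P (i + 1)), x ∈ Pgr (i + 1) j → d i x ∈ Pgr i j)
    (hεsurj : Function.Surjective ε)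
    -- minimality: the kernels are superfluous submodules
    (hmin0 : ∀ N : Submodule A (P 0), N ⊔ LinearMap.ker ε = ⊤ → N = ⊤)
    (hmin : ∀ (i : ℕ) (N : Submodule A (P (i + 1))), N ⊔ LinearMap.ker (d i) = ⊤ → N = ⊤) :
    -- `M` is Koszul, i.e. each `Ω^{i+1}(M) = range (d i)` is generated in degree `i+1`,
    (∀ i : ℕ, Submodule.span A
        ((LinearMap.range (d i) : Set (P i)) ∩ (Pgr i (i + 1) : Set (P i))) =
        LinearMap.range (d i)) ↔
    -- if and only if `Ω^{i+1}(M) ⊆ J·P^i` and `Ω^{i+1}(M) ∩ J²·P^i = J·Ω^{i+1}(M)`.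
    (∀ i : ℕ,
      LinearMap.range (d i) ≤
        (Submodule.span A (⋃ n : ℕ, (𝒜 (n + 1) : Set A)) : Ideal A) •
          (⊤ : Submodule A (P i)) ∧
      ((Submodule.span A (⋃ n : ℕ, (𝒜 (n + 1) : Set A)) : Ideal A) •
          ((Submodule.span A (⋃ n : ℕ, (𝒜 (n + 1) : Set A)) : Ideal A) •
            (⊤ : Submodule A (P i)))) ⊓ LinearMap.range (d i) =
        (Submodule.span A (⋃ n : ℕ, (𝒜 (n + 1) : Set A)) : Ideal A) •
          LinearMap.range (d i)) := by
  let : Decomposition ℳ := ((isInternal_submodule_iff_iSupIndep_and_iSup_eq_top ℳ).2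
    ⟨hMgr.2, hMgr.1⟩).chooseDecomposition
  let (i : ℕ) : Decomposition (Pgr i) := ((isInternal_submodule_iff_iSupIndep_and_iSup_eq_top
    (Pgr i)).2 ⟨(hPgr i).2, (hPgr i).1⟩).chooseDecomposition
  have : SetLike.GradedSMul 𝒜 ℳ := ⟨fun _ _ _ _ ↦ hMsmul _ _ _ _⟩
  have (i : ℕ) : SetLike.GradedSMul 𝒜 (Pgr i) := ⟨fun _ _ _ _ ↦ hPsmul i _ _ _ _⟩
  have hP (i : ℕ) (hK : ∀ j < i, span A ((LinearMap.range (d j) : Set (P j)) ∩ Pgr j (j + 1)) =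
      LinearMap.range (d j)) : span A (Pgr i i : Set (P i)) = ⊤ := by
    cases i with
    | zero =>
      refine span_grade_eq_top_of_ker_superfluous ℳ (Pgr 0) 𝒜 ε hεgr ?_ hmin0
      simpa [LinearMap.range_eq_top_of_surjective ε hεsurj] using hMgen
    | succ i =>
      exact span_grade_eq_top_of_ker_superfluous (Pgr i) (Pgr (i + 1)) 𝒜 (d i) (hdgr i)
        (hK i i.lt_succ_self) (hmin i)
  constructor
  · intro hK i
    exact ⟨le_irrelevantIdeal_smul_top (Pgr i) (hP i fun j _ ↦ hK j) (hK i),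
      irrelevantIdeal_smul_irrelevantIdeal_smul_top_inf_eq (Pgr i) (hP i fun j _ ↦ hK j) (hK i)⟩
  · intro hC i
    induction i using Nat.strong_induction_on with
    | _ i ih =>
      exact span_inter_grade_eq_of_irrelevantIdeal (Pgr i) hgen (hP i ih)
        (isHomogeneous_range (Pgr i) (Pgr (i + 1)) (d i) (hdgr i)) (hC i).1 (hC i).2

/-- Let `A` be a positively graded, locally finite algebra generated in
degrees 0 and 1, and let `M` be a graded `A`-module generated in degree 0, with a minimal
graded projective resolution `⋯ → P¹ → P⁰ → M → 0`.  Then `M` is Koszul (every graded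
syzygy `Ω^i(M)` is generated in degree `i`) if and only if for all `i > 0`,
`Ω^i(M) ⊆ J·P^{i-1}` and `Ω^i(M) ∩ J²·P^{i-1} = J·Ω^i(M)`, where `J = ⊕_{i ≥ 1} A_i`.
(Here `Ω^{i+1}(M)` is realized as the image of `d_i : P^{i+1} → P^i`.) -/
theorem stmt5
    {k A : Type*} [Field k] [Ring A] [Algebra k A]
    (𝒜 : ℕ → Submodule k A) [GradedAlgebra 𝒜]
    (hlf : ∀ i, FiniteDimensional k (𝒜 i))
    (hgen : ∀ i, 𝒜 1 * 𝒜 i = 𝒜 (i + 1))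
    -- the graded module `M`, generated in degree 0
    {M : Type*} [AddCommGroup M] [Module k M] [Module A M] [IsScalarTower k A M]
    (ℳ : ℕ → Submodule k M)
    (hMgr : iSup ℳ = ⊤ ∧ iSupIndep ℳ)
    (hMsmul : ∀ (i j : ℕ) (a : A) (x : M), a ∈ 𝒜 i → x ∈ ℳ j → a • x ∈ ℳ (i + j))
    (hMgen : Submodule.span A (ℳ 0 : Set M) = ⊤)
    -- a minimal graded projective resolution `⋯ → P 1 → P 0 → M → 0`
    (P : ℕ → Type*) [∀ i, AddCommGroup (P i)] [∀ i, Module k (P i)]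
    [∀ i, Module A (P i)] [∀ i, IsScalarTower k A (P i)]
    (Pgr : ∀ i, ℕ → Submodule k (P i))
    (hPgr : ∀ i, iSup (Pgr i) = ⊤ ∧ iSupIndep (Pgr i))
    (hPsmul : ∀ (i : ℕ) (n j : ℕ) (a : A) (x : P i), a ∈ 𝒜 n → x ∈ Pgr i j →
      a • x ∈ Pgr i (n + j))
    (hPproj : ∀ i, Module.Projective A (P i))
    (ε : P 0 →ₗ[A] M) (d : ∀ i, P (i + 1) →ₗ[A] P i)
    (hεgr : ∀ (j : ℕ) (x : P 0), x ∈ Pgr 0 j → ε x ∈ ℳ j)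
    (hdgr : ∀ (i j : ℕ) (x : P (i + 1)), x ∈ Pgr (i + 1) j → d i x ∈ Pgr i j)
    (hεsurj : Function.Surjective ε)
    (hexact0 : LinearMap.range (d 0) = LinearMap.ker ε)
    (hexact : ∀ i, LinearMap.range (d (i + 1)) = LinearMap.ker (d i))
    -- minimality: the kernels are superfluous submodules
    (hmin0 : ∀ N : Submodule A (P 0), N ⊔ LinearMap.ker ε = ⊤ → N = ⊤)
    (hmin : ∀ (i : ℕ) (N : Submodule A (P (i + 1))), N ⊔ LinearMap.ker (d i) = ⊤ → N = ⊤) :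
    -- `M` is Koszul, i.e. each `Ω^{i+1}(M) = range (d i)` is generated in degree `i+1`,
    (∀ i : ℕ, Submodule.span A
        ((LinearMap.range (d i) : Set (P i)) ∩ (Pgr i (i + 1) : Set (P i))) =
        LinearMap.range (d i)) ↔
    -- if and only if `Ω^{i+1}(M) ⊆ J·P^i` and `Ω^{i+1}(M) ∩ J²·P^i = J·Ω^{i+1}(M)`.
    (∀ i : ℕ,
      LinearMap.range (d i) ≤
        (Submodule.span A (⋃ n : ℕ, (𝒜 (n + 1) : Set A)) : Ideal A) •
          (⊤ : Submodule A (P i)) ∧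
      ((Submodule.span A (⋃ n : ℕ, (𝒜 (n + 1) : Set A)) : Ideal A) •
          ((Submodule.span A (⋃ n : ℕ, (𝒜 (n + 1) : Set A)) : Ideal A) •
            (⊤ : Submodule A (P i)))) ⊓ LinearMap.range (d i) =
        (Submodule.span A (⋃ n : ℕ, (𝒜 (n + 1) : Set A)) : Ideal A) •
          LinearMap.range (d i)) :=
  stmt5_general 𝒜 hgen ℳ hMgr hMsmul hMgen P Pgr hPgr hPsmul ε d hεgr hdgr hεsurj hmin0 hmin
end

section
/- Let A be a positively graded, locally finite algebra generated in degrees 0 and 1 such that A is projective as an A_0-module and A_0 satisfies the splitting property (S). Then for a positively graded A-module M, the following are equivalent: (1) Ω^i(M) is a projective A_0-module for all i ≥ 0; (2) Ω^i(M)_i is a projective A_0-module for all i ≥ 0; (3) M is a projective A_0-module. -/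
/-!
Everything is checked one degree at a time. Since the differentials preserve degrees, in each
degree `j` the resolution cuts into short exact sequences of `A₀`-modules
`0 → Ω^{i+1}(M)_j → (P_i)_j → Ω^i(M)_j → 0`, whose middle terms are projective: `P_i` is
`A₀`-projective because `A` is, and `(P_i)_j` is a direct summand of it. Projectivity of the right
term then passes to the left one, and by (S) also back. Hence `M_j` is projective if and only if
`Ω^i(M)_j` is, for any single `i`; taking `i = j` gives (2) ⇔ (3). The same argument without the
grading gives (3) ⇒ (1).
-/

-- The splitting property (S), quantified over modules in universe `v`.
def SplittingProperty.{v, u} (R : Type u) [Ring R] : Prop :=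
  ∀ (X Y : Type v) [AddCommGroup X] [AddCommGroup Y] [Module R X] [Module R Y] (f : X →ₗ[R] Y),
    Module.Projective R X → Module.Projective R Y → Function.Injective f →
    ∃ g : Y →ₗ[R] X, g.comp f = LinearMap.id

theorem SplittingProperty.of_ulift.{v, v', u} {R : Type u} [Ring R]
    (hS : SplittingProperty.{max v v'} R) : SplittingProperty.{v} R := by
  intro X Y _ _ _ _ f hX hY hf
  let eX : ULift.{v'} X ≃ₗ[R] X := ULift.moduleEquiv
  let eY : ULift.{v'} Y ≃ₗ[R] Y := ULift.moduleEquiv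
  obtain ⟨g, hg⟩ := hS (ULift X) (ULift Y) (eY.symm.toLinearMap ∘ₗ f ∘ₗ eX.toLinearMap)
    inferInstance inferInstance (by simpa using hf)
  refine ⟨eX.toLinearMap ∘ₗ g ∘ₗ eY.symm.toLinearMap, LinearMap.ext fun x => ?_⟩
  simpa using congrArg eX (LinearMap.congr_fun hg (eX.symm x))

theorem Module.Projective.trans {R S N : Type*} [Ring R] [Ring S] [AddCommGroup N]
    [Module R S] [IsScalarTower R S S] [Module S N] [Module R N] [IsScalarTower R S N]
    [Module.Projective R S] (h : Module.Projective S N) : Module.Projective R N := by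
  classical
  obtain ⟨s, hs⟩ := Module.projective_def.mp h
  have : Module.Projective R (N →₀ S) :=
    Module.Projective.of_equiv (finsuppLequivDFinsupp (M := S) (ι := N) R).symm
  exact Module.Projective.of_split (s.restrictScalars R)
    ((Finsupp.linearCombination S id).restrictScalars R) (LinearMap.ext hs)

theorem DirectSum.IsInternal.projective_iff {R M ι : Type*} [Ring R] [AddCommGroup M]
    [Module R M] [DecidableEq ι] {C : ι → Submodule R M} (h : DirectSum.IsInternal C) :
    Module.Projective R M ↔ ∀ i, Module.Projective R (C i) := by
  let e := LinearEquiv.ofBijective (DirectSum.coeLinearMap C) h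
  exact ⟨fun _ => Module.Projective.directSum_iff.mp (.of_equiv e.symm),
    fun H => have := Module.Projective.directSum_iff.mpr H; .of_equiv e⟩

def Submodule.ofSMulMem {R S M : Type*} [Semiring R] [Semiring S] [AddCommMonoid M] [Module R M]
    [Module S M] (p : Submodule R M) (h : ∀ (s : S) (x : M), x ∈ p → s • x ∈ p) :
    Submodule S M :=
  { p.toAddSubmonoid with smul_mem' := h }

-- Internality only depends on the underlying additive submonoids.
theorem DirectSum.IsInternal.ofSMulMem {R S M ι : Type*} [Semiring R] [Semiring S]
    [AddCommMonoid M] [Module R M] [Module S M] [DecidableEq ι] {p : ι → Submodule R M}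
    {h : ∀ i (s : S) (x : M), x ∈ p i → s • x ∈ p i} (hp : DirectSum.IsInternal p) :
    DirectSum.IsInternal fun i => (p i).ofSMulMem (h i) :=
  hp

theorem smul_mem_of_toSubmodule_eq_grade_zero {k A X : Type*} [CommSemiring k] [Semiring A]
    [Algebra k A] [AddCommMonoid X] [Module k X] [Module A X] {𝒜 : ℕ → Submodule k A}
    {A₀ : Subalgebra k A} (hA₀ : A₀.toSubmodule = 𝒜 0) {𝒳 : ℕ → Submodule k X}
    (h𝒳 : ∀ n j (a : A) (x : X), a ∈ 𝒜 n → x ∈ 𝒳 j → a • x ∈ 𝒳 (n + j))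
    (j : ℕ) (b : A₀) (x : X) (hx : x ∈ 𝒳 j) : b • x ∈ 𝒳 j :=
  zero_add j ▸ h𝒳 0 j b x (hA₀ ▸ b.2) hx

namespace Function.Exact

variable {R M N P : Type*} [Ring R] [AddCommGroup M] [AddCommGroup N] [AddCommGroup P]
  [Module R M] [Module R N] [Module R P] {f : M →ₗ[R] N} {g : N →ₗ[R] P}

theorem projective_left (h : Exact f g) (hf : Injective f) (hg : Surjective g)
    [Module.Projective R N] [Module.Projective R P] : Module.Projective R M := by
  obtain ⟨l, hl⟩ := g.exists_rightInverse_of_surjective (LinearMap.range_eq_top.mpr hg)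
  have := Module.Projective.of_equiv (h.splitSurjectiveEquiv hf ⟨l, hl⟩).1
  exact .of_split (LinearMap.inl R M P) (LinearMap.fst R M P) (LinearMap.fst_comp_inl R M P)

theorem projective_right (h : Exact f g) (hg : Surjective g) [Module.Projective R N]
    {l : N →ₗ[R] M} (hl : l ∘ₗ f = LinearMap.id) : Module.Projective R P := by
  have := Module.Projective.of_equiv (h.splitInjectiveEquiv hg ⟨l, hl⟩).1
  exact .of_split (LinearMap.inr R M P) (LinearMap.snd R M P) (LinearMap.snd_comp_inr R M P)

theorem projective_range (h : Exact f g) (hg : Surjective g) [Module.Projective R N]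
    [Module.Projective R P] : Module.Projective R (LinearMap.range f) :=
  projective_left (LinearMap.exact_iff.mpr ((LinearMap.exact_iff.mp h).trans
    (Submodule.range_subtype _).symm)) Subtype.val_injective hg

end Function.Exact

namespace LinearMap

variable {R N P ι : Type*} [Ring R] [AddCommGroup N] [AddCommGroup P] [Module R N] [Module R P]
  {C : ι → Submodule R N} {D : ι → Submodule R P} {g : N →ₗ[R] P}

theorem map_grade_eq_range_inf (hC : iSup C = ⊤) (hD : iSupIndep D)
    (hg : ∀ i, ∀ x ∈ C i, g x ∈ D i) (j : ι) : (C j).map g = range g ⊓ D j := by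
  refine le_antisymm (le_inf (map_le_range) (Submodule.map_le_iff_le_comap.mpr (hg j))) ?_
  rintro _ ⟨⟨x, rfl⟩, hgx⟩
  -- the degree-`j` part of `x` is already a preimage, since `D` is independent
  have key : ∀ x ∈ iSup C, ∃ x' ∈ C j, g x - g x' ∈ ⨆ (i) (_ : i ≠ j), D i := by
    intro x hx
    induction hx using Submodule.iSup_induction' with
    | mem i x hx =>
      by_cases hij : i = j
      · subst hij; exact ⟨x, hx, by simp⟩
      · exact ⟨0, zero_mem _, by
        simpa using Submodule.mem_iSup_of_mem i (Submodule.mem_iSup_of_mem hij (hg i x hx))⟩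
    | zero => exact ⟨0, zero_mem _, by simp⟩
    | add x y _ _ hx hy =>
      obtain ⟨x', hx', hxx'⟩ := hx
      obtain ⟨y', hy', hyy'⟩ := hy
      exact ⟨x' + y', add_mem hx' hy', by
        simpa [add_sub_add_comm] using add_mem hxx' hyy'⟩
  obtain ⟨x', hx', hxx'⟩ := key x (hC ▸ Submodule.mem_top)
  have : g x - g x' = 0 :=
    Submodule.disjoint_def.mp (hD j) _ (sub_mem hgx (hg j x' hx')) hxx'
  exact ⟨x', hx', (sub_eq_zero.mp this).symm⟩

end LinearMap

universe v

namespace Function.Exact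

variable {R M P ι : Type*} {N : Type v} [Ring R] [AddCommGroup M] [AddCommGroup N]
  [AddCommGroup P] [Module R M] [Module R N] [Module R P] {f : M →ₗ[R] N} {g : N →ₗ[R] P}
  {C : ι → Submodule R N} {D : ι → Submodule R P}

theorem exists_exact_grade (h : Exact f g) (hC : iSup C = ⊤) (hD : iSupIndep D)
    (hg : ∀ i, ∀ x ∈ C i, g x ∈ D i) (j : ι) :
    ∃ gj : C j →ₗ[R] ↥(LinearMap.range g ⊓ D j),
      Exact (Submodule.inclusion (inf_le_right : LinearMap.range f ⊓ C j ≤ C j)) gj ∧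
        Surjective gj := by
  refine ⟨g.restrict fun x hx => Submodule.mem_inf.mpr ⟨LinearMap.mem_range_self g x, hg j x hx⟩,
    ?_, ?_⟩
  · rintro ⟨x, hx⟩
    simp only [Set.mem_range, Subtype.ext_iff, Submodule.coe_inclusion, Subtype.exists,
      Submodule.mem_inf]
    change g x = 0 ↔ _
    rw [h x]
    exact ⟨fun hf => ⟨x, ⟨hf, hx⟩, rfl⟩, fun ⟨_, ⟨hf, _⟩, hy⟩ => hy ▸ hf⟩
  · rintro ⟨y, hy⟩
    rw [← LinearMap.map_grade_eq_range_inf hC hD hg] at hy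
    obtain ⟨x, hx, rfl⟩ := hy
    exact ⟨⟨x, hx⟩, rfl⟩

variable (hC : iSup C = ⊤) (hD : iSupIndep D) (hg : ∀ i, ∀ x ∈ C i, g x ∈ D i) (j : ι)
include hC hD hg

theorem projective_range_inf_of_right (h : Exact f g) [Module.Projective R (C j)]
    [Module.Projective R ↥(LinearMap.range g ⊓ D j)] :
    Module.Projective R ↥(LinearMap.range f ⊓ C j) := by
  obtain ⟨gj, hexact, hsurj⟩ := h.exists_exact_grade hC hD hg j
  exact hexact.projective_left (Submodule.inclusion_injective _) hsurj

theorem projective_range_inf_of_left (hS : SplittingProperty.{v} R) (h : Exact f g)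
    [Module.Projective R (C j)]
    [Module.Projective R ↥(LinearMap.range f ⊓ C j)] :
    Module.Projective R ↥(LinearMap.range g ⊓ D j) := by
  obtain ⟨gj, hexact, hsurj⟩ := h.exists_exact_grade hC hD hg j
  obtain ⟨l, hl⟩ := hS ↥(LinearMap.range f ⊓ C j) (C j) (Submodule.inclusion inf_le_right)
    inferInstance inferInstance (Submodule.inclusion_injective _)
  exact hexact.projective_right hsurj hl

end Function.Exact

section Resolution

variable {B M : Type*} {P : ℕ → Type v} [Ring B] [AddCommGroup M] [Module B M]
  [∀ i, AddCommGroup (P i)] [∀ i, Module B (P i)]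
  {ε : P 0 →ₗ[B] M} {d : ∀ i, P (i + 1) →ₗ[B] P i} (hε : Function.Surjective ε)
  (hε0 : Function.Exact (d 0) ε) (hd : ∀ i, Function.Exact (d (i + 1)) (d i))
include hε hε0 hd

theorem projective_range_of_exact [∀ i, Module.Projective B (P i)] [Module.Projective B M]
    (i : ℕ) : Module.Projective B (LinearMap.range (d i)) := by
  induction i with
  | zero => exact hε0.projective_range hε
  | succ i ih =>
    have hexact : Function.Exact (d (i + 1)) (d i).rangeRestrict := LinearMap.exact_iff.mpr
      ((LinearMap.ker_rangeRestrict _).trans (LinearMap.exact_iff.mp (hd i)))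
    exact hexact.projective_range (d i).surjective_rangeRestrict

variable (hS : SplittingProperty.{v} B) {CM : ℕ → Submodule B M} {CP : ∀ i, ℕ → Submodule B (P i)}
  (hCPtop : ∀ i, iSup (CP i) = ⊤) (hCPind : ∀ i, iSupIndep (CP i))
  (hεgr : ∀ j, ∀ x ∈ CP 0 j, ε x ∈ CM j) (hdgr : ∀ i j, ∀ x ∈ CP (i + 1) j, d i x ∈ CP i j)
  [∀ i j, Module.Projective B (CP i j)]
include hS hCPtop hCPind hεgr hdgr

theorem projective_grade_iff_projective_range_inf (hCM : iSupIndep CM) (j i : ℕ) :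
    Module.Projective B (CM j) ↔ Module.Projective B ↥(LinearMap.range (d i) ⊓ CP i j) := by
  induction i with
  | zero =>
    have hrange : LinearMap.range ε ⊓ CM j = CM j := by
      rw [LinearMap.range_eq_top.mpr hε, top_inf_eq]
    rw [← hrange]
    exact ⟨fun _ => hε0.projective_range_inf_of_right (hCPtop 0) hCM hεgr j,
      fun _ => hε0.projective_range_inf_of_left (hCPtop 0) hCM hεgr j hS⟩
  | succ i ih =>
    exact ih.trans ⟨fun _ => (hd i).projective_range_inf_of_right (hCPtop _) (hCPind i) (hdgr i) j,
      fun _ => (hd i).projective_range_inf_of_left (hCPtop _) (hCPind i) (hdgr i) j hS⟩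

theorem projective_iff_projective_range_inf_diag (hCM : DirectSum.IsInternal CM) :
    Module.Projective B M ↔ Module.Projective B (CM 0) ∧
      ∀ i, Module.Projective B ↥(LinearMap.range (d i) ⊓ CP i (i + 1)) := by
  have key := projective_grade_iff_projective_range_inf hε hε0 hd hS hCPtop hCPind hεgr hdgr
    hCM.submodule_iSupIndep
  rw [hCM.projective_iff]
  refine ⟨fun h => ⟨h 0, fun i => (key (i + 1) i).mp (h (i + 1))⟩, fun ⟨h₀, h⟩ j => ?_⟩
  cases j with
  | zero => exact h₀
  | succ j => exact (key (j + 1) j).mpr (h j)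

end Resolution

theorem stmt9_general
    {k A : Type} [Field k] [Ring A] [Algebra k A]
    (𝒜 : ℕ → Submodule k A)
    -- the degree-0 part, as a subalgebra
    (A₀ : Subalgebra k A) (hA₀ : A₀.toSubmodule = 𝒜 0)
    -- `A` is a projective `A₀`-module
    (hAproj : Module.Projective A₀ A)
    -- the splitting property (S)
    (hS : ∀ (X Y : Type w) [AddCommGroup X] [AddCommGroup Y]
      [Module A₀ X] [Module A₀ Y] (f : X →ₗ[A₀] Y),
      Module.Projective A₀ X → Module.Projective A₀ Y → Function.Injective f →
      ∃ g : Y →ₗ[A₀] X, g.comp f = LinearMap.id)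
    -- a positively graded `A`-module `M`
    {M : Type} [AddCommGroup M] [Module k M] [Module A M]
    (ℳ : ℕ → Submodule k M)
    (hMgr : iSup ℳ = ⊤ ∧ iSupIndep ℳ)
    (hMsmul : ∀ (i j : ℕ) (a : A) (x : M), a ∈ 𝒜 i → x ∈ ℳ j → a • x ∈ ℳ (i + j))
    -- a minimal graded projective resolution `⋯ → P 1 → P 0 → M → 0`
    (P : ℕ → Type) [∀ i, AddCommGroup (P i)] [∀ i, Module k (P i)]
    [∀ i, Module A (P i)]
    (Pgr : ∀ i, ℕ → Submodule k (P i))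
    (hPgr : ∀ i, iSup (Pgr i) = ⊤ ∧ iSupIndep (Pgr i))
    (hPsmul : ∀ (i : ℕ) (n j : ℕ) (a : A) (x : P i), a ∈ 𝒜 n → x ∈ Pgr i j →
      a • x ∈ Pgr i (n + j))
    (hPproj : ∀ i, Module.Projective A (P i))
    (ε : P 0 →ₗ[A] M) (d : ∀ i, P (i + 1) →ₗ[A] P i)
    (hεgr : ∀ (j : ℕ) (x : P 0), x ∈ Pgr 0 j → ε x ∈ ℳ j)
    (hdgr : ∀ (i j : ℕ) (x : P (i + 1)), x ∈ Pgr (i + 1) j → d i x ∈ Pgr i j)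
    (hεsurj : Function.Surjective ε)
    (hexact0 : LinearMap.range (d 0) = LinearMap.ker ε)
    (hexact : ∀ i, LinearMap.range (d (i + 1)) = LinearMap.ker (d i))
    -- the degree-`i` parts `Ω^i(M)_i` of the syzygies, as `A₀`-modules:
    -- `Ω^0(M)_0 = M_0` and `Ω^{i+1}(M)_{i+1} = (range dᵢ) ∩ (P i)_{i+1}`
    (M₀' : Submodule A₀ M) (hM₀' : (M₀' : Set M) = (ℳ 0 : Set M))
    (Ω' : ∀ i, Submodule A₀ (P i))
    (hΩ' : ∀ i, (Ω' i : Set (P i)) =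
      (LinearMap.range (d i) : Set (P i)) ∩ (Pgr i (i + 1) : Set (P i))) :
    -- (1) ↔ (3) and (2) ↔ (3)
    ((Module.Projective A₀ M ∧ ∀ i, Module.Projective A₀ ↥(LinearMap.range (d i))) ↔
        Module.Projective A₀ M) ∧
    ((Module.Projective A₀ ↥M₀' ∧ ∀ i, Module.Projective A₀ ↥(Ω' i)) ↔
        Module.Projective A₀ M) := by
  let CM j : Submodule A₀ M :=
    (ℳ j).ofSMulMem (smul_mem_of_toSubmodule_eq_grade_zero hA₀ hMsmul j)
  let CP i j : Submodule A₀ (P i) :=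
    (Pgr i j).ofSMulMem (smul_mem_of_toSubmodule_eq_grade_zero hA₀ (hPsmul i) j)
  have hCM : DirectSum.IsInternal CM :=
    (DirectSum.isInternal_submodule_of_iSupIndep_of_iSup_eq_top hMgr.2 hMgr.1).ofSMulMem
  have hCP i : DirectSum.IsInternal (CP i) :=
    (DirectSum.isInternal_submodule_of_iSupIndep_of_iSup_eq_top (hPgr i).2 (hPgr i).1).ofSMulMem
  have hPproj₀ i : Module.Projective A₀ (P i) := Module.Projective.trans (R := A₀) (hPproj i)
  have hCPproj i j : Module.Projective A₀ (CP i j) := (hCP i).projective_iff.mp (hPproj₀ i) j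
  let εA := ε.restrictScalars A₀
  let dA i := (d i).restrictScalars A₀
  have hε0 : Function.Exact (dA 0) εA :=
    (LinearMap.exact_iff.mpr hexact0.symm : Function.Exact (d 0) ε)
  have hd i : Function.Exact (dA (i + 1)) (dA i) :=
    (LinearMap.exact_iff.mpr (hexact i).symm : Function.Exact (d (i + 1)) (d i))
  obtain rfl : M₀' = CM 0 := SetLike.ext' hM₀'
  obtain rfl : Ω' = fun i => LinearMap.range (dA i) ⊓ CP i (i + 1) :=
    funext fun i => SetLike.ext' (hΩ' i)
  exact ⟨⟨And.left, fun h => ⟨h, projective_range_of_exact (ε := εA) hεsurj hε0 hd⟩⟩,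
    (projective_iff_projective_range_inf_diag (ε := εA) (CM := CM) hεsurj hε0 hd
      (SplittingProperty.of_ulift hS) (fun i => (hCP i).submodule_iSup_eq_top)
      (fun i => (hCP i).submodule_iSupIndep) hεgr hdgr hCM).symm⟩

/-- Let `A` be a positively graded, locally finite algebra generated in
degrees 0 and 1 such that `A` is projective as an `A₀`-module and `A₀` satisfies the
splitting property (S).  Then for a positively graded `A`-module `M` (with a minimal
graded projective resolution realizing its syzygies `Ω^i(M)`), the following are
equivalent: (1) every `Ω^i(M)` is a projective `A₀`-module; (2) every degree-`i` part
`Ω^i(M)_i` is a projective `A₀`-module; (3) `M` is a projective `A₀`-module. -/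
theorem stmt9
    {k A : Type} [Field k] [Ring A] [Algebra k A]
    (𝒜 : ℕ → Submodule k A) [GradedAlgebra 𝒜]
    (hlf : ∀ i, FiniteDimensional k (𝒜 i))
    (hgen : ∀ i, 𝒜 1 * 𝒜 i = 𝒜 (i + 1))
    -- the degree-0 part, as a subalgebra
    (A₀ : Subalgebra k A) (hA₀ : A₀.toSubmodule = 𝒜 0)
    -- `A` is a projective `A₀`-module
    (hAproj : Module.Projective A₀ A)
    -- the splitting property (S)
    (hS : ∀ (X Y : Type w) [AddCommGroup X] [AddCommGroup Y]
      [Module A₀ X] [Module A₀ Y] (f : X →ₗ[A₀] Y),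
      Module.Projective A₀ X → Module.Projective A₀ Y → Function.Injective f →
      ∃ g : Y →ₗ[A₀] X, g.comp f = LinearMap.id)
    -- a positively graded `A`-module `M`
    {M : Type} [AddCommGroup M] [Module k M] [Module A M] [IsScalarTower k A M]
    (ℳ : ℕ → Submodule k M)
    (hMgr : iSup ℳ = ⊤ ∧ iSupIndep ℳ)
    (hMsmul : ∀ (i j : ℕ) (a : A) (x : M), a ∈ 𝒜 i → x ∈ ℳ j → a • x ∈ ℳ (i + j))
    -- a minimal graded projective resolution `⋯ → P 1 → P 0 → M → 0`
    (P : ℕ → Type) [∀ i, AddCommGroup (P i)] [∀ i, Module k (P i)]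
    [∀ i, Module A (P i)] [∀ i, IsScalarTower k A (P i)]
    (Pgr : ∀ i, ℕ → Submodule k (P i))
    (hPgr : ∀ i, iSup (Pgr i) = ⊤ ∧ iSupIndep (Pgr i))
    (hPsmul : ∀ (i : ℕ) (n j : ℕ) (a : A) (x : P i), a ∈ 𝒜 n → x ∈ Pgr i j →
      a • x ∈ Pgr i (n + j))
    (hPproj : ∀ i, Module.Projective A (P i))
    (ε : P 0 →ₗ[A] M) (d : ∀ i, P (i + 1) →ₗ[A] P i)
    (hεgr : ∀ (j : ℕ) (x : P 0), x ∈ Pgr 0 j → ε x ∈ ℳ j)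
    (hdgr : ∀ (i j : ℕ) (x : P (i + 1)), x ∈ Pgr (i + 1) j → d i x ∈ Pgr i j)
    (hεsurj : Function.Surjective ε)
    (hexact0 : LinearMap.range (d 0) = LinearMap.ker ε)
    (hexact : ∀ i, LinearMap.range (d (i + 1)) = LinearMap.ker (d i))
    (hmin0 : ∀ N : Submodule A (P 0), N ⊔ LinearMap.ker ε = ⊤ → N = ⊤)
    (hmin : ∀ (i : ℕ) (N : Submodule A (P (i + 1))), N ⊔ LinearMap.ker (d i) = ⊤ → N = ⊤)
    -- the degree-`i` parts `Ω^i(M)_i` of the syzygies, as `A₀`-modules: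
    -- `Ω^0(M)_0 = M_0` and `Ω^{i+1}(M)_{i+1} = (range dᵢ) ∩ (P i)_{i+1}`
    (M₀' : Submodule A₀ M) (hM₀' : (M₀' : Set M) = (ℳ 0 : Set M))
    (Ω' : ∀ i, Submodule A₀ (P i))
    (hΩ' : ∀ i, (Ω' i : Set (P i)) =
      (LinearMap.range (d i) : Set (P i)) ∩ (Pgr i (i + 1) : Set (P i))) :
    -- (1) ↔ (3) and (2) ↔ (3)
    ((Module.Projective A₀ M ∧ ∀ i, Module.Projective A₀ ↥(LinearMap.range (d i))) ↔
        Module.Projective A₀ M) ∧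
    ((Module.Projective A₀ ↥M₀' ∧ ∀ i, Module.Projective A₀ ↥(Ω' i)) ↔
        Module.Projective A₀ M) :=
  stmt9_general 𝒜 A₀ hA₀ hAproj hS ℳ hMgr hMsmul P Pgr hPgr hPsmul hPproj ε d hεgr hdgr hεsurj
    hexact0 hexact M₀' hM₀' Ω' hΩ'
end

section
/- Let A = ⊕_{i≥0} A_i be a positively graded, locally finite algebra generated in degrees 0 and 1, let 𝔯 be the Jacobson radical of A_0, and let ℜ = A𝔯A be the two-sided ideal generated by 𝔯. Then the degree-s component satisfies ℜ_s = Σ_{i=0}^{s} A_i 𝔯 A_{s-i} = ((𝔯 + J)^{s+1})_s, where J = ⊕_{i≥1} A_i. -/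
/-!
Since `𝔯 ⊆ A₀`, the ideal `A𝔯A` is the sum of the pieces `A_i 𝔯 A_j ⊆ A_{i+j}`, so its degree-`s`
part is `Σ_{i ≤ s} A_i 𝔯 A_{s-i}`. As `A_i = A_1^i A_0` and `𝔯` is an `A₀`-bimodule, each
`A_i 𝔯 A_{s-i}` lies in `(𝔯 + J)^{s+1}`. Conversely, expanding the power gives
`(𝔯 + J)^{s+1} ⊆ A𝔯A + J^{s+1}`, and `J^{s+1}` lives in degrees `> s`.
-/

open DirectSum Submodule

theorem DirectSum.Decomposition.iSup_inf_eq_of_le {ι R M : Type*} [DecidableEq ι] [Semiring R]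
    [AddCommMonoid M] [Module R M] (ℳ : ι → Submodule R M) [Decomposition ℳ]
    {N : ι → Submodule R M} (hN : ∀ i, N i ≤ ℳ i) (i : ι) :
    (⨆ j, N j) ⊓ ℳ i = N i := by
  refine le_antisymm ?_ (le_inf (le_iSup N i) (hN i))
  rintro x ⟨hxN, hxi⟩
  rw [← decompose_of_mem_same ℳ hxi]
  refine iSup_induction N (motive := fun y => (decompose ℳ y i : M) ∈ N i) hxN ?_ ?_ ?_
  · intro j y hy
    obtain rfl | hji := eq_or_ne j i
    · rwa [decompose_of_mem_same ℳ (hN j hy)]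
    · rw [decompose_of_mem_ne ℳ (hN j hy) hji]
      exact zero_mem _
  · simp
  · intro y z hy hz
    simpa using add_mem hy hz

section TopMulMulTop

variable {R A : Type*} [CommSemiring R] [Semiring A] [Algebra R A]

theorem Submodule.mul_top_mul_mul_top_le (I p : Submodule R A) : p * (⊤ * I * ⊤) ≤ ⊤ * I * ⊤ := by
  simp only [← mul_assoc]
  gcongr
  exact le_top

theorem Submodule.top_mul_mul_top_mul_le (I p : Submodule R A) : ⊤ * I * ⊤ * p ≤ ⊤ * I * ⊤ := by
  rw [mul_assoc]
  gcongr
  exact le_top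

theorem Submodule.le_top_mul_mul_top (I : Submodule R A) : I ≤ ⊤ * I * ⊤ :=
  calc I = 1 * I * 1 := by rw [one_mul, mul_one]
    _ ≤ ⊤ * I * ⊤ := by gcongr <;> exact le_top

theorem Submodule.sup_pow_le_top_mul_mul_top_sup_pow (I J : Submodule R A) (n : ℕ) :
    (I ⊔ J) ^ n ≤ ⊤ * I * ⊤ ⊔ J ^ n := by
  induction n with
  | zero => exact le_sup_right
  | succ n ih =>
    calc (I ⊔ J) ^ (n + 1) ≤ (⊤ * I * ⊤ ⊔ J ^ n) * (I ⊔ J) := by rw [pow_succ]; gcongr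
      _ = ⊤ * I * ⊤ * (I ⊔ J) ⊔ (J ^ n * I ⊔ J ^ (n + 1)) := by
        rw [sup_mul, mul_sup (J ^ n), pow_succ]
      _ ≤ ⊤ * I * ⊤ ⊔ J ^ (n + 1) := by
        refine sup_le (le_sup_of_le_left (top_mul_mul_top_mul_le _ _)) (sup_le_sup_right ?_ _)
        exact (mul_le_mul_right (le_top_mul_mul_top I) _).trans (mul_top_mul_mul_top_le _ _)

end TopMulMulTop

section Subalgebra

variable {R A : Type*} [CommSemiring R] [Semiring A] [Algebra R A] {B : Subalgebra R A}

theorem Subalgebra.span_val_image_ideal_le (I : Ideal B) :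
    span R (Subtype.val '' (I : Set B)) ≤ Subalgebra.toSubmodule B :=
  span_le.mpr <| by rintro _ ⟨y, -, rfl⟩; exact y.2

theorem Subalgebra.toSubmodule_mul_span_val_image_ideal_le (I : Ideal B) :
    Subalgebra.toSubmodule B * span R (Subtype.val '' (I : Set B)) ≤
      span R (Subtype.val '' (I : Set B)) := by
  rw [← span_eq (Subalgebra.toSubmodule B), span_mul_span, span_le]
  rintro _ ⟨a, ha, _, ⟨y, hy, rfl⟩, rfl⟩
  exact subset_span ⟨⟨a, ha⟩ * y, I.mul_mem_left _ hy, rfl⟩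

theorem Subalgebra.span_val_image_ideal_mul_toSubmodule_le (I : Ideal B) [I.IsTwoSided] :
    span R (Subtype.val '' (I : Set B)) * Subalgebra.toSubmodule B ≤
      span R (Subtype.val '' (I : Set B)) := by
  rw [← span_eq (Subalgebra.toSubmodule B), span_mul_span, span_le]
  rintro _ ⟨_, ⟨y, hy, rfl⟩, a, ha, rfl⟩
  exact subset_span ⟨y * ⟨a, ha⟩, I.mul_mem_right _ hy, rfl⟩

end Subalgebra

namespace GradedAlgebra

variable {k A : Type*} [CommSemiring k] [Semiring A] [Algebra k A] (𝒜 : ℕ → Submodule k A)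

theorem le_iSup_succ_pow_mul (hgen : ∀ i, 𝒜 1 * 𝒜 i = 𝒜 (i + 1)) (i : ℕ) :
    𝒜 i ≤ (⨆ m, 𝒜 (m + 1)) ^ i * 𝒜 0 := by
  induction i with
  | zero => rw [pow_zero, one_mul]
  | succ i ih =>
    rw [← hgen, pow_succ', mul_assoc]
    exact mul_le_mul' (le_iSup (fun m => 𝒜 (m + 1)) 0) ih

variable [GradedAlgebra 𝒜]

theorem mul_le (i j : ℕ) : 𝒜 i * 𝒜 j ≤ 𝒜 (i + j) :=
  Submodule.mul_le.mpr fun _ ha _ hb => SetLike.mul_mem_graded ha hb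

theorem iSup_eq_top : ⨆ i, 𝒜 i = ⊤ :=
  (Decomposition.isInternal 𝒜).submodule_iSup_eq_top

theorem iSup_succ_pow_le (n : ℕ) : (⨆ m, 𝒜 (m + 1)) ^ n ≤ ⨆ m, 𝒜 (m + n) := by
  induction n with
  | zero => simp [iSup_eq_top]
  | succ n ih =>
    calc (⨆ m, 𝒜 (m + 1)) ^ (n + 1) ≤ (⨆ m, 𝒜 (m + n)) * ⨆ m, 𝒜 (m + 1) := by
          rw [pow_succ]; gcongr
      _ ≤ ⨆ m, 𝒜 (m + (n + 1)) := by
          simp only [iSup_mul, mul_iSup]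
          refine iSup_le fun a => iSup_le fun b => (mul_le 𝒜 _ _).trans ?_
          exact le_iSup_of_le (a + b) (congrArg 𝒜 (by omega)).le

theorem iSup_succ_mul_zero_le : (⨆ m, 𝒜 (m + 1)) * 𝒜 0 ≤ ⨆ m, 𝒜 (m + 1) := by
  rw [iSup_mul]
  exact iSup_mono fun m => mul_le 𝒜 _ 0

def idealComponent (R : Submodule k A) (s : ℕ) : Submodule k A :=
  ⨆ i ∈ Finset.range (s + 1), 𝒜 i * R * 𝒜 (s - i)

variable {𝒜} {R : Submodule k A}

theorem idealComponent_le (hR : R ≤ 𝒜 0) (s : ℕ) : idealComponent 𝒜 R s ≤ 𝒜 s := by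
  refine iSup₂_le fun i hi => ?_
  calc 𝒜 i * R * 𝒜 (s - i) ≤ 𝒜 i * 𝒜 0 * 𝒜 (s - i) := by gcongr
    _ ≤ 𝒜 (i + 0) * 𝒜 (s - i) := by gcongr; exact mul_le 𝒜 i 0
    _ ≤ 𝒜 s := (mul_le 𝒜 _ _).trans (congrArg 𝒜 (by simp at hi; omega)).le

variable (𝒜 R) in
theorem top_mul_mul_top_eq_iSup_idealComponent :
    ⊤ * R * ⊤ = ⨆ s, idealComponent 𝒜 R s := by
  refine le_antisymm ?_ (iSup_le fun s => iSup₂_le fun i _ => by gcongr <;> exact le_top)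
  simp only [← iSup_eq_top 𝒜, iSup_mul, mul_iSup]
  refine iSup_le fun j => iSup_le fun i => le_iSup_of_le (i + j) ?_
  exact le_iSup₂_of_le (f := fun i' _ => 𝒜 i' * R * 𝒜 (i + j - i')) i (by simp)
    (by rw [Nat.add_sub_cancel_left])

theorem top_mul_mul_top_inf (hR : R ≤ 𝒜 0) (s : ℕ) :
    ⊤ * R * ⊤ ⊓ 𝒜 s = idealComponent 𝒜 R s := by
  rw [top_mul_mul_top_eq_iSup_idealComponent 𝒜 R]
  exact Decomposition.iSup_inf_eq_of_le 𝒜 (idealComponent_le hR) s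

theorem idealComponent_le_sup_pow (hgen : ∀ i, 𝒜 1 * 𝒜 i = 𝒜 (i + 1))
    (hRl : 𝒜 0 * R ≤ R) (hRr : R * 𝒜 0 ≤ R) (s : ℕ) :
    idealComponent 𝒜 R s ≤ (R ⊔ ⨆ m, 𝒜 (m + 1)) ^ (s + 1) := by
  set J := ⨆ m, 𝒜 (m + 1)
  set P := R ⊔ J
  have hPr : P * 𝒜 0 ≤ P := by
    rw [Submodule.sup_mul]
    exact sup_le_sup hRr (iSup_succ_mul_zero_le 𝒜)
  refine iSup₂_le fun i hi => ?_
  have his : i + 1 + (s - i) = s + 1 := by simp at hi; omega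
  calc 𝒜 i * R * 𝒜 (s - i)
      ≤ J ^ i * 𝒜 0 * R * (J ^ (s - i) * 𝒜 0) := by
        gcongr <;> exact le_iSup_succ_pow_mul 𝒜 hgen _
    _ = J ^ i * (𝒜 0 * R) * J ^ (s - i) * 𝒜 0 := by simp only [mul_assoc]
    _ ≤ P ^ i * P * P ^ (s - i) * 𝒜 0 := by
        gcongr
        · exact le_sup_right
        · exact hRl.trans le_sup_left
        · exact le_sup_right
    _ = P ^ s * (P * 𝒜 0) := by rw [← pow_succ, ← pow_add, his, pow_succ, mul_assoc]
    _ ≤ P ^ (s + 1) := by rw [pow_succ]; gcongr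

theorem sup_pow_inf (hR : R ≤ 𝒜 0) (hgen : ∀ i, 𝒜 1 * 𝒜 i = 𝒜 (i + 1))
    (hRl : 𝒜 0 * R ≤ R) (hRr : R * 𝒜 0 ≤ R) (s : ℕ) :
    (R ⊔ ⨆ m, 𝒜 (m + 1)) ^ (s + 1) ⊓ 𝒜 s = idealComponent 𝒜 R s := by
  refine le_antisymm ?_ <|
    le_inf (idealComponent_le_sup_pow hgen hRl hRr s) (idealComponent_le hR s)
  -- `⨆ d, M d` contains both `⊤ * R * ⊤` and `J ^ (s + 1)`, yet its degree-`s` piece is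
  -- still `idealComponent 𝒜 R s`.
  let M d := if d ≤ s then idealComponent 𝒜 R d else 𝒜 d
  have hM (d : ℕ) : M d ≤ 𝒜 d := by
    unfold M; split_ifs
    exacts [idealComponent_le hR d, le_rfl]
  have hpow : (R ⊔ ⨆ m, 𝒜 (m + 1)) ^ (s + 1) ≤ ⨆ d, M d := by
    refine (sup_pow_le_top_mul_mul_top_sup_pow _ _ _).trans (sup_le ?_ ?_)
    · rw [top_mul_mul_top_eq_iSup_idealComponent 𝒜 R]
      refine iSup_mono fun d => ?_
      unfold M; split_ifs
      exacts [le_rfl, idealComponent_le hR d]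
    · refine (iSup_succ_pow_le 𝒜 _).trans (iSup_le fun m => le_iSup_of_le (m + (s + 1)) ?_)
      exact (if_neg (by omega : ¬m + (s + 1) ≤ s)).ge
  calc (R ⊔ ⨆ m, 𝒜 (m + 1)) ^ (s + 1) ⊓ 𝒜 s ≤ (⨆ d, M d) ⊓ 𝒜 s := inf_le_inf_right _ hpow
    _ = idealComponent 𝒜 R s := by
      rw [Decomposition.iSup_inf_eq_of_le 𝒜 hM]
      simp [M]

end GradedAlgebra

theorem stmt14_general
    {k A : Type*} [Field k] [Ring A] [Algebra k A]
    (𝒜 : ℕ → Submodule k A) [GradedAlgebra 𝒜]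
    (hgen : ∀ i, 𝒜 1 * 𝒜 i = 𝒜 (i + 1))
    -- `A₀` is the degree-0 part, viewed as a subalgebra
    (A₀ : Subalgebra k A) (hA₀ : A₀.toSubmodule = 𝒜 0)
    -- `𝔯` is (the image in `A` of) the Jacobson radical of `A₀`
    (𝔯 : Submodule k A)
    (h𝔯 : 𝔯 = Submodule.span k ((↑) '' ((Ideal.jacobson (⊥ : Ideal A₀) : Ideal A₀) : Set A₀)))
    (s : ℕ) :
    ((⊤ : Submodule k A) * 𝔯 * (⊤ : Submodule k A)) ⊓ 𝒜 s =
        (⨆ i ∈ Finset.range (s + 1), 𝒜 i * 𝔯 * 𝒜 (s - i)) ∧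
    ((⊤ : Submodule k A) * 𝔯 * (⊤ : Submodule k A)) ⊓ 𝒜 s =
        ((𝔯 ⊔ ⨆ n : ℕ, 𝒜 (n + 1)) ^ (s + 1)) ⊓ 𝒜 s := by
  subst h𝔯
  have hR := A₀.span_val_image_ideal_le (Ideal.jacobson ⊥)
  have hRl := A₀.toSubmodule_mul_span_val_image_ideal_le (Ideal.jacobson ⊥)
  have hRr := A₀.span_val_image_ideal_mul_toSubmodule_le (Ideal.jacobson ⊥)
  rw [hA₀] at hR hRl hRr
  have h₁ := GradedAlgebra.top_mul_mul_top_inf hR s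
  exact ⟨h₁, h₁.trans (GradedAlgebra.sup_pow_inf hR hgen hRl hRr s).symm⟩

/-- Let `A = ⊕_{i ≥ 0} A_i` be a positively graded, locally finite
algebra generated in degrees 0 and 1, let `𝔯` be the Jacobson radical of `A_0`, and let
`ℜ = A𝔯A` be the two-sided ideal generated by `𝔯`.  Then the degree-`s` component
satisfies `ℜ_s = Σ_{i=0}^{s} A_i 𝔯 A_{s-i} = ((𝔯 + J)^{s+1})_s`, where `J = ⊕_{i ≥ 1} A_i`.
(Degree-`s` components of homogeneous subspaces are expressed as intersections with `A_s`.) -/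
theorem stmt14
    {k A : Type*} [Field k] [Ring A] [Algebra k A]
    (𝒜 : ℕ → Submodule k A) [GradedAlgebra 𝒜]
    (hlf : ∀ i, FiniteDimensional k (𝒜 i))
    (hgen : ∀ i, 𝒜 1 * 𝒜 i = 𝒜 (i + 1))
    -- `A₀` is the degree-0 part, viewed as a subalgebra
    (A₀ : Subalgebra k A) (hA₀ : A₀.toSubmodule = 𝒜 0)
    -- `𝔯` is (the image in `A` of) the Jacobson radical of `A₀`
    (𝔯 : Submodule k A)
    (h𝔯 : 𝔯 = Submodule.span k ((↑) '' ((Ideal.jacobson (⊥ : Ideal A₀) : Ideal A₀) : Set A₀)))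
    (s : ℕ) :
    ((⊤ : Submodule k A) * 𝔯 * (⊤ : Submodule k A)) ⊓ 𝒜 s =
        (⨆ i ∈ Finset.range (s + 1), 𝒜 i * 𝔯 * 𝒜 (s - i)) ∧
    ((⊤ : Submodule k A) * 𝔯 * (⊤ : Submodule k A)) ⊓ 𝒜 s =
        ((𝔯 ⊔ ⨆ n : ℕ, 𝒜 (n + 1)) ^ (s + 1)) ⊓ 𝒜 s :=
  stmt14_general 𝒜 hgen A₀ hA₀ 𝔯 h𝔯 s
end

section
/- Let A be a basic finite-dimensional algebra with a complete set of orthogonal primitive idempotents {e_λ}_{λ∈Λ}. Then A is standardly stratified for every preorder on Λ if and only if A is a direct sum of local algebras (equivalently, e_λ A e_μ = 0 for all λ ≠ μ). -/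
/-- The standard module `Δ_λ = P_λ/K_λ`, where `P_λ = A e_λ` and `K_λ ≤ P_λ`. -/
abbrev standardQuot {A : Type*} [Ring A] (e : A) (K : Submodule A A) :=
  ↥(Ideal.span {e} : Ideal A) ⧸ K.comap (Ideal.span {e} : Ideal A).subtype

/-- `A` is standardly stratified (in the sense of Cline–Parshall–Scott) with respect to a
(pre)order `r` on the index set `Λ` of a complete set of orthogonal primitive idempotents
`e`: there exist submodules `K_λ ≤ P_λ = A e_λ` giving standard modules `Δ_λ = P_λ / K_λ`
such that `[Δ_λ : S_μ] = 0` unless `r μ λ` (expressed as `e_μ` annihilating `Δ_λ` whenever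
`¬ r μ λ`), and each `K_λ` has a finite filtration with factors isomorphic to modules
`Δ_μ` with `μ > λ` (i.e. `r λ μ` and `¬ r μ λ`). -/
def IsStandardlyStratified (A : Type*) [Ring A] {Λ : Type*} (e : Λ → A)
    (r : Λ → Λ → Prop) : Prop :=
  ∃ K : Λ → Submodule A A,
    ∀ lam : Λ, K lam ≤ (Ideal.span {e lam} : Ideal A) ∧
      (∀ μ : Λ, ¬ r μ lam → ∀ x : standardQuot (e lam) (K lam), e μ • x = 0) ∧
      (∃ (n : ℕ) (F : Fin (n + 1) → Submodule A A),
        Monotone F ∧ F 0 = ⊥ ∧ F (Fin.last n) = K lam ∧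
        ∀ j : Fin n, ∃ μ : Λ, r lam μ ∧ ¬ r μ lam ∧
          Nonempty ((↥(F j.succ) ⧸ (F j.castSucc).comap (F j.succ).subtype) ≃ₗ[A]
            standardQuot (e μ) (K μ)))

/-- Let `A` be a basic finite-dimensional algebra with a complete set of
orthogonal primitive idempotents `{e_λ}_{λ ∈ Λ}`.  Then `A` is standardly stratified for
every preorder on `Λ` if and only if `A` is a direct sum of local algebras, equivalently
`e_λ A e_μ = 0` for all `λ ≠ μ`. -/
theorem stmt17
    {k A : Type*} [Field k] [Ring A] [Algebra k A] [FiniteDimensional k A]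
    {Λ : Type*} [Fintype Λ] (e : Λ → A)
    -- complete set of orthogonal idempotents
    (hsum : ∑ lam : Λ, e lam = 1)
    (hidem : ∀ lam, e lam * e lam = e lam)
    (horth : ∀ lam μ, lam ≠ μ → e lam * e μ = 0)
    -- each `e_λ` is a primitive idempotent
    (hprim : ∀ lam, e lam ≠ 0 ∧ ∀ f g : A, f * f = f → g * g = g → f * g = 0 → g * f = 0 →
      e lam = f + g → f = 0 ∨ g = 0)
    -- `A` is basic: the indecomposable projectives `A e_λ` are pairwise non-isomorphic
    (hbasic : ∀ lam μ, lam ≠ μ →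
      IsEmpty (↥(Ideal.span {e lam} : Ideal A) ≃ₗ[A] ↥(Ideal.span {e μ} : Ideal A))) :
    (∀ r : Λ → Λ → Prop, IsPreorder Λ r → IsStandardlyStratified A e r) ↔
      (∀ lam μ : Λ, lam ≠ μ → ∀ a : A, e lam * a * e μ = 0) := by
  constructor
  · intro H lam μ hne a
    obtain ⟨K, hK⟩ := H Eq ⟨⟩
    obtain ⟨_, hann, n, F, hmono, hF0, hFlast, hfac⟩ := hK μ
    -- For the discrete order there are no strict relations, so n = 0 and K μ = ⊥
    have hn : n = 0 := by
      by_contra hn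
      obtain ⟨ν, hr1, hr2, -⟩ := hfac ⟨0, Nat.pos_of_ne_zero hn⟩
      exact hr2 hr1.symm
    subst hn
    have hKbot : K μ = ⊥ := by
      rw [← hFlast, Fin.last, ← hF0]
      rfl
    -- apply the annihilation condition to `a * e μ ∈ A e μ`
    have hmem : a * e μ ∈ (Ideal.span {e μ} : Ideal A) := by
      rw [Ideal.mem_span_singleton']
      exact ⟨a, rfl⟩
    have h0 := hann lam hne (Submodule.Quotient.mk ⟨a * e μ, hmem⟩)
    rw [← Submodule.Quotient.mk_smul, Submodule.Quotient.mk_eq_zero,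
      Submodule.mem_comap] at h0
    have : e lam • (⟨a * e μ, hmem⟩ : (Ideal.span {e μ} : Ideal A)) = 0 := by
      have h0' := h0
      rw [hKbot, Submodule.mem_bot] at h0'
      exact Subtype.ext h0'
    have : e lam * (a * e μ) = 0 := congrArg Subtype.val this
    rwa [← mul_assoc] at this
  · intro h r hr
    refine ⟨fun _ => ⊥, fun lam => ⟨bot_le, ?_, 0, fun _ => ⊥, monotone_const, rfl, rfl,
      fun j => j.elim0⟩⟩
    intro μ hμ x
    have hne : μ ≠ lam := fun hmu => hμ (hmu ▸ hr.refl μ)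
    obtain ⟨v, rfl⟩ := Submodule.Quotient.mk_surjective _ x
    rw [← Submodule.Quotient.mk_smul]
    have hv : e μ • v = 0 := by
      obtain ⟨b, hb⟩ := Ideal.mem_span_singleton'.mp v.2
      apply Subtype.ext
      show e μ * (v : A) = 0
      rw [← hb, ← mul_assoc]
      exact h μ lam hne b
    rw [hv]
    exact Submodule.Quotient.mk_eq_zero _ |>.mpr (Submodule.zero_mem _)
end
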